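/- arXiv:2205.13031 — 10 statements merged into one kernel-verified Lean document; each statement's English description precedes it below -/
import Mathlib

section
/- Let φ : (A, ∂_A, F_A) → (B, ∂_B, F_B) be an mfDGA morphism over F = ZMod 2 (a DGA morphism with φ(F_A ℓ) ⊆ F_B ℓ for all ℓ). Then τ(B,∂_B,F_B) ≤ τ(A,∂_A,F_A): for each ℓ, 1 ∈ ∂_A '' (F_A ℓ) implies 1 ∈ ∂_B '' (F_B ℓ), hence sSup {ℓ | 1 ∉ ∂_B '' (F_B ℓ)} ≤ sSup {ℓ | 1 ∉ ∂_A '' (F_A ℓ)} in ℕ∞. -/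
theorem Function.Semiconj.one_mem_image {α β : Type*} [One α] [One β]
    {φ : α → β} {dA : α → α} {dB : β → β} (hφ : φ 1 = 1) (hcomm : Function.Semiconj φ dA dB)
    {s : Set α} {t : Set β} (hst : Set.MapsTo φ s t) (h : (1 : α) ∈ dA '' s) :
    (1 : β) ∈ dB '' t := by
  obtain ⟨x, hx, hdx⟩ := h
  exact ⟨φ x, hst hx, by rw [← hcomm, hdx, hφ]⟩

theorem stmt_5_general {A B : Type*} [Ring A] [Algebra (ZMod 2) A] [Ring B] [Algebra (ZMod 2) B]
    (dA : A →ₗ[ZMod 2] A) (dB : B →ₗ[ZMod 2] B)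
    (FA : ℕ → Subalgebra (ZMod 2) A) (FB : ℕ → Subalgebra (ZMod 2) B)
    (φ : A →ₐ[ZMod 2] B)
    (hchain : ∀ x : A, φ (dA x) = dB (φ x))
    (hfilt : ∀ ℓ : ℕ, ∀ x ∈ FA ℓ, φ x ∈ FB ℓ) :
    (∀ ℓ : ℕ, (1 : A) ∈ dA '' (FA ℓ : Set A) → (1 : B) ∈ dB '' (FB ℓ : Set B)) ∧
      sSup ((fun ℓ : ℕ => (ℓ : ℕ∞)) '' {ℓ : ℕ | (1 : B) ∉ dB '' (FB ℓ : Set B)}) ≤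
        sSup ((fun ℓ : ℕ => (ℓ : ℕ∞)) '' {ℓ : ℕ | (1 : A) ∉ dA '' (FA ℓ : Set A)}) := by
  have pushforward (ℓ : ℕ) : (1 : A) ∈ dA '' (FA ℓ : Set A) → (1 : B) ∈ dB '' (FB ℓ : Set B) :=
    Function.Semiconj.one_mem_image (map_one φ) hchain (hfilt ℓ)
  exact ⟨pushforward, sSup_le_sSup <| Set.image_mono fun ℓ hB hA => hB (pushforward ℓ hA)⟩

/-- An mfDGA morphism `φ : (A, dA, FA) → (B, dB, FB)` over `F = ZMod 2`
satisfies `τ(B) ≤ τ(A)`: exactness of the unit in `FA ℓ` is pushed forward to `FB ℓ`,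
hence `sSup {ℓ | 1 ∉ dB '' (FB ℓ)} ≤ sSup {ℓ | 1 ∉ dA '' (FA ℓ)}` in `ℕ∞`. -/
theorem stmt_5 {A B : Type*} [Ring A] [Algebra (ZMod 2) A] [Ring B] [Algebra (ZMod 2) B]
    (dA : A →ₗ[ZMod 2] A) (dB : B →ₗ[ZMod 2] B)
    (hleibA : ∀ x y : A, dA (x * y) = dA x * y + x * dA y)
    (honeA : dA 1 = 0) (hsqA : ∀ x : A, dA (dA x) = 0)
    (hleibB : ∀ x y : B, dB (x * y) = dB x * y + x * dB y)
    (honeB : dB 1 = 0) (hsqB : ∀ x : B, dB (dB x) = 0)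
    (FA : ℕ → Subalgebra (ZMod 2) A) (FB : ℕ → Subalgebra (ZMod 2) B)
    (hmonoA : Monotone FA) (hmonoB : Monotone FB)
    (hpresA : ∀ ℓ : ℕ, ∀ x ∈ FA ℓ, dA x ∈ FA ℓ)
    (hpresB : ∀ ℓ : ℕ, ∀ x ∈ FB ℓ, dB x ∈ FB ℓ)
    (φ : A →ₐ[ZMod 2] B)
    (hchain : ∀ x : A, φ (dA x) = dB (φ x))
    (hfilt : ∀ ℓ : ℕ, ∀ x ∈ FA ℓ, φ x ∈ FB ℓ) :
    (∀ ℓ : ℕ, (1 : A) ∈ dA '' (FA ℓ : Set A) → (1 : B) ∈ dB '' (FB ℓ : Set B)) ∧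
      sSup ((fun ℓ : ℕ => (ℓ : ℕ∞)) '' {ℓ : ℕ | (1 : B) ∉ dB '' (FB ℓ : Set B)}) ≤
        sSup ((fun ℓ : ℕ => (ℓ : ℕ∞)) '' {ℓ : ℕ | (1 : A) ∉ dA '' (FA ℓ : Set A)}) :=
  stmt_5_general dA dB FA FB φ hchain hfilt
end

section
/- If there exist mfDGA morphisms φ : (A, ∂_A, F_A) → (B, ∂_B, F_B) and ψ : (B, ∂_B, F_B) → (A, ∂_A, F_A) over F = ZMod 2 (in particular, if the two mfDGAs are chain homotopy equivalent), then τ(A,∂_A,F_A) = τ(B,∂_B,F_B) and τ_Aug(A,∂_A,F_A) = τ_Aug(B,∂_B,F_B): for each ℓ, 1 ∈ ∂_A '' (F_A ℓ) holds if and only if 1 ∈ ∂_B '' (F_B ℓ), and (F_A ℓ, ∂_A) admits an augmentation if and only if (F_B ℓ, ∂_B) does. -/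
/-! Both conditions are transported by filtered chain maps: a primitive `x` of `1` in `F_A ℓ`
pushes forward to the primitive `φ x` in `F_B ℓ`, and an augmentation of `F_B ℓ` pulls back
to `F_A ℓ` by precomposition with `φ`. Having maps in both directions, the conditions agree
level by level, hence so do the suprema defining `τ` and `τ_Aug`. -/

/-- The sub-DGA `(S, d)` of `(A, d)` admits an augmentation: a unital `ZMod 2`-algebra
homomorphism `ε : S → ZMod 2` annihilating the differential. -/
def IsAugOn {A : Type*} [Ring A] [Algebra (ZMod 2) A]
    (d : A →ₗ[ZMod 2] A) (S : Subalgebra (ZMod 2) A) : Prop :=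
  ∃ ε : S →ₐ[ZMod 2] ZMod 2, ∀ (x : S) (h : d (x : A) ∈ S), ε ⟨d (x : A), h⟩ = 0

theorem one_mem_image_of_chain_map {R A B : Type*} [CommSemiring R] [Semiring A] [Algebra R A]
    [Semiring B] [Algebra R B] {dA : A →ₗ[R] A} {dB : B →ₗ[R] B}
    {SA : Subalgebra R A} {SB : Subalgebra R B} {φ : A →ₐ[R] B}
    (hchain : ∀ x, φ (dA x) = dB (φ x)) (hfilt : ∀ x ∈ SA, φ x ∈ SB)
    (h : (1 : A) ∈ dA '' SA) : (1 : B) ∈ dB '' SB := by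
  obtain ⟨x, hx, hdx⟩ := h
  exact ⟨φ x, hfilt x hx, by rw [← hchain, hdx, map_one]⟩

theorem IsAugOn.of_chain_map {A B : Type*} [Ring A] [Algebra (ZMod 2) A] [Ring B]
    [Algebra (ZMod 2) B] {dA : A →ₗ[ZMod 2] A} {dB : B →ₗ[ZMod 2] B}
    {SA : Subalgebra (ZMod 2) A} {SB : Subalgebra (ZMod 2) B} {φ : A →ₐ[ZMod 2] B}
    (hchain : ∀ x, φ (dA x) = dB (φ x)) (hfilt : ∀ x ∈ SA, φ x ∈ SB)
    (h : IsAugOn dB SB) : IsAugOn dA SA := by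
  obtain ⟨ε, hε⟩ := h
  refine ⟨ε.comp ((φ.comp SA.val).codRestrict SB fun x => hfilt x x.2), fun x hdx => ?_⟩
  have hdφx : dB (φ x) ∈ SB := hchain x ▸ hfilt _ hdx
  exact (congrArg ε (Subtype.ext (hchain x))).trans (hε ⟨φ x, hfilt x x.2⟩ hdφx)

theorem stmt_7_general {A B : Type*} [Ring A] [Algebra (ZMod 2) A] [Ring B] [Algebra (ZMod 2) B]
    (dA : A →ₗ[ZMod 2] A) (dB : B →ₗ[ZMod 2] B)
    (FA : ℕ → Subalgebra (ZMod 2) A) (FB : ℕ → Subalgebra (ZMod 2) B)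
    (φ : A →ₐ[ZMod 2] B) (ψ : B →ₐ[ZMod 2] A)
    (hchainφ : ∀ x : A, φ (dA x) = dB (φ x))
    (hchainψ : ∀ y : B, ψ (dB y) = dA (ψ y))
    (hfiltφ : ∀ ℓ : ℕ, ∀ x ∈ FA ℓ, φ x ∈ FB ℓ)
    (hfiltψ : ∀ ℓ : ℕ, ∀ y ∈ FB ℓ, ψ y ∈ FA ℓ) :
    (∀ ℓ : ℕ,
      ((1 : A) ∈ dA '' (FA ℓ : Set A) ↔ (1 : B) ∈ dB '' (FB ℓ : Set B)) ∧
      (IsAugOn dA (FA ℓ) ↔ IsAugOn dB (FB ℓ))) ∧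
      sSup ((fun ℓ : ℕ => (ℓ : ℕ∞)) '' {ℓ : ℕ | (1 : A) ∉ dA '' (FA ℓ : Set A)}) =
        sSup ((fun ℓ : ℕ => (ℓ : ℕ∞)) '' {ℓ : ℕ | (1 : B) ∉ dB '' (FB ℓ : Set B)}) ∧
      sSup ((fun ℓ : ℕ => (ℓ : ℕ∞)) '' {ℓ : ℕ | IsAugOn dA (FA ℓ)}) =
        sSup ((fun ℓ : ℕ => (ℓ : ℕ∞)) '' {ℓ : ℕ | IsAugOn dB (FB ℓ)}) := by
  have hone : ∀ ℓ, (1 : A) ∈ dA '' (FA ℓ : Set A) ↔ (1 : B) ∈ dB '' (FB ℓ : Set B) :=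
    fun ℓ => ⟨one_mem_image_of_chain_map hchainφ (hfiltφ ℓ),
      one_mem_image_of_chain_map hchainψ (hfiltψ ℓ)⟩
  have haug : ∀ ℓ, IsAugOn dA (FA ℓ) ↔ IsAugOn dB (FB ℓ) :=
    fun ℓ => ⟨IsAugOn.of_chain_map hchainψ (hfiltψ ℓ),
      IsAugOn.of_chain_map hchainφ (hfiltφ ℓ)⟩
  refine ⟨fun ℓ => ⟨hone ℓ, haug ℓ⟩, ?_, ?_⟩
  · simp_rw [hone]
  · simp_rw [haug]

/-- If there are mfDGA morphisms in both directions between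
`(A, dA, FA)` and `(B, dB, FB)` over `F = ZMod 2` (in particular, if they are chain
homotopy equivalent), then the torsions and the algebraic torsions agree. -/
theorem stmt_7 {A B : Type*} [Ring A] [Algebra (ZMod 2) A] [Ring B] [Algebra (ZMod 2) B]
    (dA : A →ₗ[ZMod 2] A) (dB : B →ₗ[ZMod 2] B)
    (hleibA : ∀ x y : A, dA (x * y) = dA x * y + x * dA y)
    (honeA : dA 1 = 0) (hsqA : ∀ x : A, dA (dA x) = 0)
    (hleibB : ∀ x y : B, dB (x * y) = dB x * y + x * dB y)
    (honeB : dB 1 = 0) (hsqB : ∀ x : B, dB (dB x) = 0)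
    (FA : ℕ → Subalgebra (ZMod 2) A) (FB : ℕ → Subalgebra (ZMod 2) B)
    (hmonoA : Monotone FA) (hmonoB : Monotone FB)
    (hpresA : ∀ ℓ : ℕ, ∀ x ∈ FA ℓ, dA x ∈ FA ℓ)
    (hpresB : ∀ ℓ : ℕ, ∀ x ∈ FB ℓ, dB x ∈ FB ℓ)
    (φ : A →ₐ[ZMod 2] B) (ψ : B →ₐ[ZMod 2] A)
    (hchainφ : ∀ x : A, φ (dA x) = dB (φ x))
    (hchainψ : ∀ y : B, ψ (dB y) = dA (ψ y))
    (hfiltφ : ∀ ℓ : ℕ, ∀ x ∈ FA ℓ, φ x ∈ FB ℓ)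
    (hfiltψ : ∀ ℓ : ℕ, ∀ y ∈ FB ℓ, ψ y ∈ FA ℓ) :
    (∀ ℓ : ℕ,
      ((1 : A) ∈ dA '' (FA ℓ : Set A) ↔ (1 : B) ∈ dB '' (FB ℓ : Set B)) ∧
      (IsAugOn dA (FA ℓ) ↔ IsAugOn dB (FB ℓ))) ∧
      sSup ((fun ℓ : ℕ => (ℓ : ℕ∞)) '' {ℓ : ℕ | (1 : A) ∉ dA '' (FA ℓ : Set A)}) =
        sSup ((fun ℓ : ℕ => (ℓ : ℕ∞)) '' {ℓ : ℕ | (1 : B) ∉ dB '' (FB ℓ : Set B)}) ∧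
      sSup ((fun ℓ : ℕ => (ℓ : ℕ∞)) '' {ℓ : ℕ | IsAugOn dA (FA ℓ)}) =
        sSup ((fun ℓ : ℕ => (ℓ : ℕ∞)) '' {ℓ : ℕ | IsAugOn dB (FB ℓ)}) :=
  stmt_7_general dA dB FA FB φ ψ hchainφ hchainψ hfiltφ hfiltψ
end

section
/- Let (A, ∂) be the tensor algebra A = TensorAlgebra F V over F = ZMod 2 with a differential ∂, let ε_l, ε_r be augmentations of (A, ∂), and let ρ be a bilinearization projection for (ε_l, ε_r). Then ρ ∘ ∂ = ∂bl ∘ ρ as F-linear maps A → V, where ∂bl := ρ ∘ ∂ ∘ ι : V → V is the bilinearized differential. -/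
/-!
Both `ρ ∘ ∂` and `∂bl ∘ ρ` are linear maps `A → V` satisfying the twisted Leibniz rule
`φ (x * y) = εl x • φ y + εr y • φ x`: for `ρ ∘ ∂` because the augmentations kill the image of
`∂`, for `∂bl ∘ ρ` because `ρ` itself satisfies it. Such a map vanishes on scalars, as
`φ 1 = φ (1 * 1) = φ 1 + φ 1`, and is therefore determined by its values on the generators
`ι v`, where the two maps agree since `ρ ∘ ι = id`.
-/

section TwistedDerivation

variable {R A V : Type*} [CommSemiring R] [Semiring A] [Algebra R A]
  [AddCommGroup V] [Module R V]

def IsTwistedDerivation (εl εr : A →ₐ[R] R) (φ : A →ₗ[R] V) : Prop :=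
  ∀ x y, φ (x * y) = εl x • φ y + εr y • φ x

namespace IsTwistedDerivation

variable {εl εr : A →ₐ[R] R} {φ : A →ₗ[R] V}

theorem map_one_eq_zero (hφ : IsTwistedDerivation εl εr φ) : φ 1 = 0 := by
  have h := hφ 1 1
  rw [mul_one, map_one εl, map_one εr, one_smul] at h
  exact left_eq_add.mp h

theorem map_algebraMap (hφ : IsTwistedDerivation εl εr φ) (r : R) : φ (algebraMap R A r) = 0 := by
  rw [Algebra.algebraMap_eq_smul_one, map_smul, hφ.map_one_eq_zero, smul_zero]

theorem comp {W : Type*} [AddCommGroup W] [Module R W] (hφ : IsTwistedDerivation εl εr φ)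
    (g : V →ₗ[R] W) : IsTwistedDerivation εl εr (g ∘ₗ φ) := by
  intro x y
  simp only [LinearMap.comp_apply, hφ x y, map_add, map_smul]

theorem comp_leibniz (hφ : IsTwistedDerivation εl εr φ) {d : A →ₗ[R] A}
    (hleib : ∀ x y, d (x * y) = d x * y + x * d y)
    (haugl : ∀ x, εl (d x) = 0) (haugr : ∀ x, εr (d x) = 0) :
    IsTwistedDerivation εl εr (φ ∘ₗ d) := by
  intro x y
  simp only [LinearMap.comp_apply, hleib, map_add, hφ (d x) y, hφ x (d y), haugl, haugr,
    zero_smul, zero_add, add_zero]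
  exact add_comm _ _

end IsTwistedDerivation

theorem TensorAlgebra.isTwistedDerivation_ext {M : Type*} [AddCommMonoid M] [Module R M]
    {εl εr : TensorAlgebra R M →ₐ[R] R} {φ ψ : TensorAlgebra R M →ₗ[R] V}
    (hφ : IsTwistedDerivation εl εr φ) (hψ : IsTwistedDerivation εl εr ψ)
    (h : ∀ m, φ (TensorAlgebra.ι R m) = ψ (TensorAlgebra.ι R m)) : φ = ψ := by
  ext x
  induction x using TensorAlgebra.induction with
  | algebraMap r => rw [hφ.map_algebraMap, hψ.map_algebraMap]
  | ι m => exact h m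
  | mul x y hx hy => rw [hφ, hψ, hx, hy]
  | add x y hx hy => rw [map_add, map_add, hx, hy]

end TwistedDerivation

theorem stmt_11_general {V : Type*} [AddCommGroup V] [Module (ZMod 2) V]
    (d : TensorAlgebra (ZMod 2) V →ₗ[ZMod 2] TensorAlgebra (ZMod 2) V)
    (hleib : ∀ x y : TensorAlgebra (ZMod 2) V, d (x * y) = d x * y + x * d y)
    (εl εr : TensorAlgebra (ZMod 2) V →ₐ[ZMod 2] ZMod 2)
    (haugl : ∀ x, εl (d x) = 0) (haugr : ∀ x, εr (d x) = 0)
    (ρ : TensorAlgebra (ZMod 2) V →ₗ[ZMod 2] V)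
    (hρι : ∀ v : V, ρ (TensorAlgebra.ι (ZMod 2) v) = v)
    (hρmul : ∀ x y : TensorAlgebra (ZMod 2) V, ρ (x * y) = εl x • ρ y + εr y • ρ x) :
    ∀ x : TensorAlgebra (ZMod 2) V,
      ρ (d x) = ρ (d (TensorAlgebra.ι (ZMod 2) (ρ x))) := by
  have hρ : IsTwistedDerivation εl εr ρ := hρmul
  have hρd : IsTwistedDerivation εl εr (ρ ∘ₗ d) := hρ.comp_leibniz hleib haugl haugr
  have hbl : IsTwistedDerivation εl εr ((ρ ∘ₗ d ∘ₗ TensorAlgebra.ι (ZMod 2)) ∘ₗ ρ) := hρ.comp _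
  have heq := TensorAlgebra.isTwistedDerivation_ext hρd hbl fun v => by
    simp only [LinearMap.comp_apply, hρι]
  exact LinearMap.congr_fun heq

/-- For a differential `d` on the tensor algebra over `F = ZMod 2`,
augmentations `εl, εr`, and a bilinearization projection `ρ`, one has
`ρ ∘ d = ∂bl ∘ ρ` where `∂bl = ρ ∘ d ∘ ι` is the bilinearized differential. -/
theorem stmt_11 {V : Type*} [AddCommGroup V] [Module (ZMod 2) V]
    (d : TensorAlgebra (ZMod 2) V →ₗ[ZMod 2] TensorAlgebra (ZMod 2) V)
    (hleib : ∀ x y : TensorAlgebra (ZMod 2) V, d (x * y) = d x * y + x * d y)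
    (hone : d 1 = 0) (hsq : ∀ x, d (d x) = 0)
    (εl εr : TensorAlgebra (ZMod 2) V →ₐ[ZMod 2] ZMod 2)
    (haugl : ∀ x, εl (d x) = 0) (haugr : ∀ x, εr (d x) = 0)
    (ρ : TensorAlgebra (ZMod 2) V →ₗ[ZMod 2] V)
    (hρ1 : ρ 1 = 0) (hρι : ∀ v : V, ρ (TensorAlgebra.ι (ZMod 2) v) = v)
    (hρmul : ∀ x y : TensorAlgebra (ZMod 2) V, ρ (x * y) = εl x • ρ y + εr y • ρ x) :
    ∀ x : TensorAlgebra (ZMod 2) V,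
      ρ (d x) = ρ (d (TensorAlgebra.ι (ZMod 2) (ρ x))) :=
  stmt_11_general d hleib εl εr haugl haugr ρ hρι hρmul
end

section
/- Let (A, ∂) be the tensor algebra A = TensorAlgebra F V over F = ZMod 2 with a differential ∂, let ε_l, ε_r be augmentations of (A, ∂), and let ρ be a bilinearization projection for (ε_l, ε_r). Then the bilinearized differential squares to zero: ∂bl ∘ ∂bl = 0, where ∂bl := ρ ∘ ∂ ∘ ι : V → V. Hence (V, ∂bl) is a chain complex (the bilinearized chain complex). -/
/-!
Make `V` a bimodule over `A = T(V)` by letting `A` act through `εl` on the left and through `εr`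
on the right. Then `ρ` is a derivation `A → V`, and so is `ρ ∘ ∂` because `∂` is a derivation
killed by both augmentations. A derivation on the tensor algebra is determined by its values on
generators, and `∂bl ∘ ρ` agrees with `ρ ∘ ∂` there; hence `∂bl ∘ ρ = ρ ∘ ∂`, and
`∂bl ∘ ∂bl = ∂bl ∘ ρ ∘ ∂ ∘ ι = ρ ∘ ∂ ∘ ∂ ∘ ι = 0`.
-/

section TwistedDerivation

variable {R A N N' : Type*} [CommSemiring R] [Semiring A] [Algebra R A]
  [AddCommMonoid N] [Module R N] [AddCommMonoid N'] [Module R N']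

/-- A derivation `A → N` for the bimodule structure on `N` in which `A` acts through `εl` on the
left and through `εr` on the right. -/
structure IsTwistedDerivation_s12 (εl εr : A →ₐ[R] R) (φ : A →ₗ[R] N) : Prop where
  map_one : φ 1 = 0
  map_mul : ∀ x y, φ (x * y) = εl x • φ y + εr y • φ x

variable {εl εr : A →ₐ[R] R} {φ : A →ₗ[R] N}

theorem IsTwistedDerivation_s12.linearMap_comp (hφ : IsTwistedDerivation_s12 εl εr φ) (f : N →ₗ[R] N') :
    IsTwistedDerivation_s12 εl εr (f ∘ₗ φ) where
  map_one := by simp [hφ.map_one]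
  map_mul x y := by simp [hφ.map_mul]

theorem IsTwistedDerivation_s12.comp_of_leibniz (hφ : IsTwistedDerivation_s12 εl εr φ) {d : A →ₗ[R] A}
    (hleib : ∀ x y, d (x * y) = d x * y + x * d y) (hone : d 1 = 0)
    (haugl : ∀ x, εl (d x) = 0) (haugr : ∀ x, εr (d x) = 0) :
    IsTwistedDerivation_s12 εl εr (φ ∘ₗ d) where
  map_one := by simp [hone]
  map_mul x y := by
    simp only [LinearMap.comp_apply, hleib, map_add, hφ.map_mul, haugl, haugr, zero_smul,
      zero_add, add_zero]
    exact add_comm _ _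

end TwistedDerivation

namespace TensorAlgebra

variable {R M N : Type*} [CommSemiring R] [AddCommMonoid M] [Module R M]
  [AddCommMonoid N] [Module R N]

theorem IsTwistedDerivation_s12.ext {εl εr : TensorAlgebra R M →ₐ[R] R}
    {φ ψ : TensorAlgebra R M →ₗ[R] N} (hφ : IsTwistedDerivation_s12 εl εr φ)
    (hψ : IsTwistedDerivation_s12 εl εr ψ) (h : φ ∘ₗ ι R = ψ ∘ₗ ι R) : φ = ψ := by
  ext x
  induction x using TensorAlgebra.induction with
  | algebraMap r => simp [Algebra.algebraMap_eq_smul_one, hφ.map_one, hψ.map_one]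
  | ι v => exact LinearMap.congr_fun h v
  | mul x y hx hy => rw [hφ.map_mul, hψ.map_mul, hx, hy]
  | add x y hx hy => rw [map_add, map_add, hx, hy]

def bilinearizedDifferential (ρ : TensorAlgebra R M →ₗ[R] M)
    (d : TensorAlgebra R M →ₗ[R] TensorAlgebra R M) : M →ₗ[R] M :=
  ρ ∘ₗ d ∘ₗ ι R

section Bilinearization

variable {εl εr : TensorAlgebra R M →ₐ[R] R} {ρ : TensorAlgebra R M →ₗ[R] M}
  {d : TensorAlgebra R M →ₗ[R] TensorAlgebra R M}

theorem bilinearizedDifferential_comp (hρ : IsTwistedDerivation_s12 εl εr ρ)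
    (hρι : ∀ v, ρ (ι R v) = v) (hleib : ∀ x y, d (x * y) = d x * y + x * d y) (hone : d 1 = 0)
    (haugl : ∀ x, εl (d x) = 0) (haugr : ∀ x, εr (d x) = 0) :
    bilinearizedDifferential ρ d ∘ₗ ρ = ρ ∘ₗ d :=
  IsTwistedDerivation_s12.ext (hρ.linearMap_comp _) (hρ.comp_of_leibniz hleib hone haugl haugr) <| by
    ext v
    simp [bilinearizedDifferential, hρι]

theorem bilinearizedDifferential_comp_self (hρ : IsTwistedDerivation_s12 εl εr ρ)
    (hρι : ∀ v, ρ (ι R v) = v) (hleib : ∀ x y, d (x * y) = d x * y + x * d y) (hone : d 1 = 0)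
    (hsq : ∀ x, d (d x) = 0) (haugl : ∀ x, εl (d x) = 0) (haugr : ∀ x, εr (d x) = 0) :
    bilinearizedDifferential ρ d ∘ₗ bilinearizedDifferential ρ d = 0 := by
  ext v
  have hcomp := LinearMap.congr_fun (bilinearizedDifferential_comp hρ hρι hleib hone haugl haugr)
    (d (ι R v))
  simpa [bilinearizedDifferential, hsq] using hcomp

end Bilinearization

end TensorAlgebra

/-- The bilinearized differential `∂bl = ρ ∘ d ∘ ι : V → V` squares to
zero, so `(V, ∂bl)` is a chain complex (the bilinearized chain complex). -/
theorem stmt_12 {V : Type*} [AddCommGroup V] [Module (ZMod 2) V]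
    (d : TensorAlgebra (ZMod 2) V →ₗ[ZMod 2] TensorAlgebra (ZMod 2) V)
    (hleib : ∀ x y : TensorAlgebra (ZMod 2) V, d (x * y) = d x * y + x * d y)
    (hone : d 1 = 0) (hsq : ∀ x, d (d x) = 0)
    (εl εr : TensorAlgebra (ZMod 2) V →ₐ[ZMod 2] ZMod 2)
    (haugl : ∀ x, εl (d x) = 0) (haugr : ∀ x, εr (d x) = 0)
    (ρ : TensorAlgebra (ZMod 2) V →ₗ[ZMod 2] V)
    (hρ1 : ρ 1 = 0) (hρι : ∀ v : V, ρ (TensorAlgebra.ι (ZMod 2) v) = v)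
    (hρmul : ∀ x y : TensorAlgebra (ZMod 2) V, ρ (x * y) = εl x • ρ y + εr y • ρ x) :
    ∀ v : V,
      ρ (d (TensorAlgebra.ι (ZMod 2) (ρ (d (TensorAlgebra.ι (ZMod 2) v))))) = 0 :=
  LinearMap.congr_fun
    (TensorAlgebra.bilinearizedDifferential_comp_self ⟨hρ1, hρmul⟩ hρι hleib hone hsq haugl haugr)
end

section
/- Let F = ZMod 2, A = TensorAlgebra F V with inclusion ι, ε_l, ε_r : A → F unital F-algebra homomorphisms, and ρ a bilinearization projection for (ε_l, ε_r). Define the counit c : V → F by c(v) = ε_l(ι v) + ε_r(ι v). Then c(ρ(x)) = ε_l(x) + ε_r(x) for every x ∈ A (in characteristic 2, the counit composed with the bilinearization projection recovers ε_l − ε_r). -/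
/-!
The maps `x ↦ c (ρ x)` and `x ↦ εl x - εr x` are both `(εl, εr)`-twisted derivations
`D (x * y) = εl x * D y + εr y * D x` on the tensor algebra, and they agree on the generators
`ι v`, so they agree everywhere. In characteristic two the differences become sums.
-/

namespace TensorAlgebra

variable {R V : Type*} [CommRing R] [AddCommGroup V] [Module R V]
  {εl εr : TensorAlgebra R V →ₐ[R] R} {ρ : TensorAlgebra R V →ₗ[R] V}

/-- `ρ 1 = ρ (1 * 1) = ρ 1 + ρ 1`. -/
lemma map_one_eq_zero_of_map_mul
    (hρmul : ∀ x y : TensorAlgebra R V, ρ (x * y) = εl x • ρ y + εr y • ρ x) : ρ 1 = 0 := by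
  have h := hρmul 1 1
  rw [mul_one, map_one εl, map_one εr, one_smul] at h
  exact left_eq_add.mp h

lemma map_algebraMap_eq_zero_of_map_mul
    (hρmul : ∀ x y : TensorAlgebra R V, ρ (x * y) = εl x • ρ y + εr y • ρ x) (r : R) :
    ρ (algebraMap R _ r) = 0 := by
  rw [Algebra.algebraMap_eq_smul_one, map_smul, map_one_eq_zero_of_map_mul hρmul, smul_zero]

theorem counit_map_eq_sub_of_map_mul (hρι : ∀ v : V, ρ (ι R v) = v)
    (hρmul : ∀ x y : TensorAlgebra R V, ρ (x * y) = εl x • ρ y + εr y • ρ x)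
    (x : TensorAlgebra R V) :
    εl (ι R (ρ x)) - εr (ι R (ρ x)) = εl x - εr x := by
  induction x using TensorAlgebra.induction with
  | algebraMap r => simp [map_algebraMap_eq_zero_of_map_mul hρmul]
  | ι v => rw [hρι]
  | mul x y hx hy =>
    simp only [hρmul, map_add, map_smul, map_mul, smul_eq_mul]
    linear_combination εl x * hy + εr y * hx
  | add x y hx hy =>
    simp only [map_add]
    linear_combination hx + hy

end TensorAlgebra

theorem stmt_13_general {V : Type*} [AddCommGroup V] [Module (ZMod 2) V]
    (εl εr : TensorAlgebra (ZMod 2) V →ₐ[ZMod 2] ZMod 2)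
    (ρ : TensorAlgebra (ZMod 2) V →ₗ[ZMod 2] V)
    (hρι : ∀ v : V, ρ (TensorAlgebra.ι (ZMod 2) v) = v)
    (hρmul : ∀ x y : TensorAlgebra (ZMod 2) V, ρ (x * y) = εl x • ρ y + εr y • ρ x) :
    ∀ x : TensorAlgebra (ZMod 2) V,
      εl (TensorAlgebra.ι (ZMod 2) (ρ x)) + εr (TensorAlgebra.ι (ZMod 2) (ρ x)) =
        εl x + εr x := by
  intro x
  simpa only [CharTwo.sub_eq_add] using
    TensorAlgebra.counit_map_eq_sub_of_map_mul hρι hρmul x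

/-- With `c : V → F`, `c v = εl (ι v) + εr (ι v)` (the counit), the
bilinearization projection satisfies `c (ρ x) = εl x + εr x` for all `x`
(in characteristic 2 this is `εl − εr`). -/
theorem stmt_13 {V : Type*} [AddCommGroup V] [Module (ZMod 2) V]
    (εl εr : TensorAlgebra (ZMod 2) V →ₐ[ZMod 2] ZMod 2)
    (ρ : TensorAlgebra (ZMod 2) V →ₗ[ZMod 2] V)
    (hρ1 : ρ 1 = 0) (hρι : ∀ v : V, ρ (TensorAlgebra.ι (ZMod 2) v) = v)
    (hρmul : ∀ x y : TensorAlgebra (ZMod 2) V, ρ (x * y) = εl x • ρ y + εr y • ρ x) :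
    ∀ x : TensorAlgebra (ZMod 2) V,
      εl (TensorAlgebra.ι (ZMod 2) (ρ x)) + εr (TensorAlgebra.ι (ZMod 2) (ρ x)) =
        εl x + εr x :=
  stmt_13_general εl εr ρ hρι hρmul
end

section
/- Let (A, ∂) be the tensor algebra A = TensorAlgebra F V over F = ZMod 2 with a differential ∂, let ε_l, ε_r be augmentations of (A, ∂), let ρ be a bilinearization projection for (ε_l, ε_r), and let ∂bl := ρ ∘ ∂ ∘ ι. Define the counit c : V → F by c(v) = ε_l(ι v) + ε_r(ι v). Then c ∘ ∂bl = 0; that is, the counit ε_l − ε_r is a chain map from the bilinearized chain complex (V, ∂bl) to F, and so descends to the fundamental class on bilinearized homology. -/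
/-!
Both sides of `εl (ι (ρ x)) - εr (ι (ρ x)) = εl x - εr x` vanish on scalars, agree on generators
and are additive; the product rule for `ρ` turns the left side on a product `x * y` into
`εl x (εl y - εr y) + εr y (εl x - εr x) = εl x εl y - εr x εr y`, which is the right side.
So the counit `εl - εr` on `V` factors through `ρ`, and on `∂ (ι v)` it vanishes because both
augmentations kill the image of `∂`. Over `ZMod 2` the difference is the sum.
-/

namespace TensorAlgebra

variable {R V : Type*} [CommRing R] [AddCommGroup V] [Module R V]

theorem augmentation_sub_augmentation_bilinearization
    (εl εr : TensorAlgebra R V →ₐ[R] R) (ρ : TensorAlgebra R V →ₗ[R] V)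
    (hρ1 : ρ 1 = 0) (hρι : ∀ v : V, ρ (ι R v) = v)
    (hρmul : ∀ x y : TensorAlgebra R V, ρ (x * y) = εl x • ρ y + εr y • ρ x)
    (x : TensorAlgebra R V) :
    εl (ι R (ρ x)) - εr (ι R (ρ x)) = εl x - εr x := by
  induction x using TensorAlgebra.induction with
  | algebraMap r =>
    have hρr : ρ (algebraMap R (TensorAlgebra R V) r) = 0 := by
      rw [Algebra.algebraMap_eq_smul_one, map_smul, hρ1, smul_zero]
    simp only [hρr, map_zero, AlgHom.commutes, sub_self]
  | ι v => rw [hρι]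
  | mul x y hx hy =>
    simp only [hρmul, map_add, map_smul, map_mul, smul_eq_mul]
    linear_combination εl x * hy + εr y * hx
  | add x y hx hy =>
    simp only [map_add]
    linear_combination hx + hy

end TensorAlgebra

theorem stmt_14_general {V : Type*} [AddCommGroup V] [Module (ZMod 2) V]
    (d : TensorAlgebra (ZMod 2) V →ₗ[ZMod 2] TensorAlgebra (ZMod 2) V)
    (εl εr : TensorAlgebra (ZMod 2) V →ₐ[ZMod 2] ZMod 2)
    (haugl : ∀ x, εl (d x) = 0) (haugr : ∀ x, εr (d x) = 0)
    (ρ : TensorAlgebra (ZMod 2) V →ₗ[ZMod 2] V)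
    (hρ1 : ρ 1 = 0) (hρι : ∀ v : V, ρ (TensorAlgebra.ι (ZMod 2) v) = v)
    (hρmul : ∀ x y : TensorAlgebra (ZMod 2) V, ρ (x * y) = εl x • ρ y + εr y • ρ x) :
    ∀ v : V,
      εl (TensorAlgebra.ι (ZMod 2) (ρ (d (TensorAlgebra.ι (ZMod 2) v)))) +
        εr (TensorAlgebra.ι (ZMod 2) (ρ (d (TensorAlgebra.ι (ZMod 2) v)))) = 0 := by
  intro v
  rw [← CharTwo.sub_eq_add, TensorAlgebra.augmentation_sub_augmentation_bilinearization
    εl εr ρ hρ1 hρι hρmul, haugl, haugr, sub_zero]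

/-- The counit `c v = εl (ι v) + εr (ι v)` satisfies `c ∘ ∂bl = 0`
where `∂bl = ρ ∘ d ∘ ι`; i.e. `εl − εr` is a chain map from the bilinearized chain
complex `(V, ∂bl)` to `F`, descending to the fundamental class on homology. -/
theorem stmt_14 {V : Type*} [AddCommGroup V] [Module (ZMod 2) V]
    (d : TensorAlgebra (ZMod 2) V →ₗ[ZMod 2] TensorAlgebra (ZMod 2) V)
    (hleib : ∀ x y : TensorAlgebra (ZMod 2) V, d (x * y) = d x * y + x * d y)
    (hone : d 1 = 0) (hsq : ∀ x, d (d x) = 0)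
    (εl εr : TensorAlgebra (ZMod 2) V →ₐ[ZMod 2] ZMod 2)
    (haugl : ∀ x, εl (d x) = 0) (haugr : ∀ x, εr (d x) = 0)
    (ρ : TensorAlgebra (ZMod 2) V →ₗ[ZMod 2] V)
    (hρ1 : ρ 1 = 0) (hρι : ∀ v : V, ρ (TensorAlgebra.ι (ZMod 2) v) = v)
    (hρmul : ∀ x y : TensorAlgebra (ZMod 2) V, ρ (x * y) = εl x • ρ y + εr y • ρ x) :
    ∀ v : V,
      εl (TensorAlgebra.ι (ZMod 2) (ρ (d (TensorAlgebra.ι (ZMod 2) v)))) +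
        εr (TensorAlgebra.ι (ZMod 2) (ρ (d (TensorAlgebra.ι (ZMod 2) v)))) = 0 :=
  stmt_14_general d εl εr haugl haugr ρ hρ1 hρι hρmul
end

section
/- Let (A, ∂) be the tensor algebra A = TensorAlgebra F V over F = ZMod 2 with a differential ∂, ε_l, ε_r augmentations of (A, ∂), ρ a bilinearization projection for (ε_l, ε_r), and ∂bl := ρ ∘ ∂ ∘ ι. Let W ⊆ V be an F-submodule and let F_W := Algebra.adjoin F (ι '' W) be the subalgebra of A generated by ι(W). If ∂(F_W) ⊆ F_W, then ρ(F_W) ⊆ W and ∂bl(W) ⊆ W. (The bilinearized differential preserves any filtration preserved by ∂; the bilinearized chain complex of an mfDGA is a filtered complex.) -/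
theorem Algebra.mem_of_mem_adjoin_of_map_mul_eq {R A M : Type*} [CommSemiring R] [Semiring A]
    [Algebra R A] [AddCommMonoid M] [Module R M] (ρ : A →ₗ[R] M) (εl εr : A → R)
    (hρ1 : ρ 1 = 0) (hρmul : ∀ x y, ρ (x * y) = εl x • ρ y + εr y • ρ x)
    (W : Submodule R M) {s : Set A} (hs : ∀ x ∈ s, ρ x ∈ W) :
    ∀ x ∈ Algebra.adjoin R s, ρ x ∈ W := by
  intro x hx
  induction hx using Algebra.adjoin_induction with
  | mem x hx => exact hs x hx
  | algebraMap r => simp [Algebra.algebraMap_eq_smul_one, hρ1]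
  | add x y _ _ hx hy => simpa only [map_add] using W.add_mem hx hy
  | mul x y _ _ hx hy => simpa only [hρmul] using W.add_mem (W.smul_mem _ hy) (W.smul_mem _ hx)

theorem stmt_15_general {V : Type*} [AddCommGroup V] [Module (ZMod 2) V]
    (d : TensorAlgebra (ZMod 2) V →ₗ[ZMod 2] TensorAlgebra (ZMod 2) V)
    (εl εr : TensorAlgebra (ZMod 2) V →ₐ[ZMod 2] ZMod 2)
    (ρ : TensorAlgebra (ZMod 2) V →ₗ[ZMod 2] V)
    (hρ1 : ρ 1 = 0) (hρι : ∀ v : V, ρ (TensorAlgebra.ι (ZMod 2) v) = v)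
    (hρmul : ∀ x y : TensorAlgebra (ZMod 2) V, ρ (x * y) = εl x • ρ y + εr y • ρ x)
    (W : Submodule (ZMod 2) V)
    (FW : Subalgebra (ZMod 2) (TensorAlgebra (ZMod 2) V))
    (hFW : FW = Algebra.adjoin (ZMod 2) (TensorAlgebra.ι (ZMod 2) '' (W : Set V)))
    (hdFW : ∀ x ∈ FW, d x ∈ FW) :
    (∀ x ∈ FW, ρ x ∈ W) ∧
      (∀ w ∈ W, ρ (d (TensorAlgebra.ι (ZMod 2) w)) ∈ W) := by
  subst hFW
  have hρgen : ∀ x ∈ TensorAlgebra.ι (ZMod 2) '' (W : Set V), ρ x ∈ W := by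
    rintro _ ⟨w, hw, rfl⟩
    rwa [hρι]
  have hρFW := Algebra.mem_of_mem_adjoin_of_map_mul_eq ρ εl εr hρ1 hρmul W hρgen
  exact ⟨hρFW, fun w hw => hρFW _ (hdFW _ (Algebra.subset_adjoin ⟨w, hw, rfl⟩))⟩

/-- Let `W ⊆ V` be a submodule and `FW = Algebra.adjoin F (ι '' W)` the
subalgebra of the tensor algebra generated by `ι(W)`. If the differential `d`
preserves `FW`, then the bilinearization projection `ρ` maps `FW` into `W` and the
bilinearized differential `∂bl = ρ ∘ d ∘ ι` maps `W` into `W`. -/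
theorem stmt_15 {V : Type*} [AddCommGroup V] [Module (ZMod 2) V]
    (d : TensorAlgebra (ZMod 2) V →ₗ[ZMod 2] TensorAlgebra (ZMod 2) V)
    (hleib : ∀ x y : TensorAlgebra (ZMod 2) V, d (x * y) = d x * y + x * d y)
    (hone : d 1 = 0) (hsq : ∀ x, d (d x) = 0)
    (εl εr : TensorAlgebra (ZMod 2) V →ₐ[ZMod 2] ZMod 2)
    (haugl : ∀ x, εl (d x) = 0) (haugr : ∀ x, εr (d x) = 0)
    (ρ : TensorAlgebra (ZMod 2) V →ₗ[ZMod 2] V)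
    (hρ1 : ρ 1 = 0) (hρι : ∀ v : V, ρ (TensorAlgebra.ι (ZMod 2) v) = v)
    (hρmul : ∀ x y : TensorAlgebra (ZMod 2) V, ρ (x * y) = εl x • ρ y + εr y • ρ x)
    (W : Submodule (ZMod 2) V)
    (FW : Subalgebra (ZMod 2) (TensorAlgebra (ZMod 2) V))
    (hFW : FW = Algebra.adjoin (ZMod 2) (TensorAlgebra.ι (ZMod 2) '' (W : Set V)))
    (hdFW : ∀ x ∈ FW, d x ∈ FW) :
    (∀ x ∈ FW, ρ x ∈ W) ∧
      (∀ w ∈ W, ρ (d (TensorAlgebra.ι (ZMod 2) w)) ∈ W) :=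
  stmt_15_general d εl εr ρ hρ1 hρι hρmul W FW hFW hdFW
end

section
/- Let (A, ∂) be the tensor algebra A = TensorAlgebra F V over F = ZMod 2 with a differential ∂, ε_l, ε_r augmentations of (A, ∂), ρ a bilinearization projection for (ε_l, ε_r), and ∂bl := ρ ∘ ∂ ∘ ι. Suppose ε_l and ε_r are DGA chain homotopic: there is an F-linear map h : A → F with h(1) = 0, h(x*y) = ε_l(x)·h(y) + h(x)·ε_r(y) for all x, y ∈ A, and ε_l(x) + ε_r(x) = h(∂x) for all x ∈ A. Then the counit c : V → F, c(v) = ε_l(ι v) + ε_r(ι v), is a coboundary for the bilinearized differential: c = (h ∘ ι) ∘ ∂bl. In particular the fundamental class of the pair (ε_l, ε_r) vanishes on bilinearized homology. -/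
/-!
Both `h` and `h ∘ ι ∘ ρ` are `(εl, εr)`-twisted derivations `TensorAlgebra F V → F`, and they
agree on generators because `ρ ∘ ι = id`; a twisted derivation on a free algebra is determined
by its values on generators, so `h = h ∘ ι ∘ ρ`. Evaluating at `∂ (ι v)` and using the homotopy
identity `εl + εr = h ∘ ∂` gives the claim.
-/

namespace TensorAlgebra

variable {R V M N : Type*} [CommSemiring R] [AddCommMonoid V] [Module R V]
  [AddCommMonoid M] [Module R M] [AddCommMonoid N] [Module R N]

structure IsTwistedDerivation (εl εr : TensorAlgebra R V →ₐ[R] R)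
    (f : TensorAlgebra R V →ₗ[R] M) : Prop where
  map_one : f 1 = 0
  map_mul : ∀ x y, f (x * y) = εl x • f y + εr y • f x

namespace IsTwistedDerivation

variable {εl εr : TensorAlgebra R V →ₐ[R] R}

theorem comp {f : TensorAlgebra R V →ₗ[R] M} (hf : IsTwistedDerivation εl εr f)
    (φ : M →ₗ[R] N) : IsTwistedDerivation εl εr (φ ∘ₗ f) where
  map_one := by rw [LinearMap.comp_apply, hf.map_one, map_zero]
  map_mul x y := by simp only [LinearMap.comp_apply, hf.map_mul, map_add, map_smul]

theorem ext {f g : TensorAlgebra R V →ₗ[R] M} (hf : IsTwistedDerivation εl εr f)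
    (hg : IsTwistedDerivation εl εr g) (hι : ∀ v, f (ι R v) = g (ι R v)) : f = g := by
  ext a
  induction a using TensorAlgebra.induction with
  | algebraMap r =>
    rw [Algebra.algebraMap_eq_smul_one, map_smul, map_smul, hf.map_one, hg.map_one]
  | ι v => exact hι v
  | mul x y hx hy => rw [hf.map_mul, hg.map_mul, hx, hy]
  | add x y hx hy => rw [map_add, map_add, hx, hy]

end IsTwistedDerivation

end TensorAlgebra

theorem stmt_16_general {V : Type*} [AddCommGroup V] [Module (ZMod 2) V]
    (d : TensorAlgebra (ZMod 2) V →ₗ[ZMod 2] TensorAlgebra (ZMod 2) V)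
    (εl εr : TensorAlgebra (ZMod 2) V →ₐ[ZMod 2] ZMod 2)
    (ρ : TensorAlgebra (ZMod 2) V →ₗ[ZMod 2] V)
    (hρ1 : ρ 1 = 0) (hρι : ∀ v : V, ρ (TensorAlgebra.ι (ZMod 2) v) = v)
    (hρmul : ∀ x y : TensorAlgebra (ZMod 2) V, ρ (x * y) = εl x • ρ y + εr y • ρ x)
    (h : TensorAlgebra (ZMod 2) V →ₗ[ZMod 2] ZMod 2)
    (hh1 : h 1 = 0)
    (hhmul : ∀ x y : TensorAlgebra (ZMod 2) V, h (x * y) = εl x * h y + h x * εr y)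
    (hhtp : ∀ x : TensorAlgebra (ZMod 2) V, εl x + εr x = h (d x)) :
    ∀ v : V,
      εl (TensorAlgebra.ι (ZMod 2) v) + εr (TensorAlgebra.ι (ZMod 2) v) =
        h (TensorAlgebra.ι (ZMod 2) (ρ (d (TensorAlgebra.ι (ZMod 2) v)))) := by
  have hρ : TensorAlgebra.IsTwistedDerivation εl εr ρ := ⟨hρ1, hρmul⟩
  have hh : TensorAlgebra.IsTwistedDerivation εl εr h :=
    ⟨hh1, fun x y => by rw [hhmul, smul_eq_mul, smul_eq_mul, mul_comm (h x)]⟩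
  have h_factors : h = (h ∘ₗ TensorAlgebra.ι (ZMod 2)) ∘ₗ ρ :=
    hh.ext (hρ.comp _) fun v => by simp only [LinearMap.comp_apply, hρι]
  intro v
  rw [hhtp]
  exact LinearMap.congr_fun h_factors _

/-- If the augmentations `εl, εr` of `(TensorAlgebra F V, d)` are DGA
chain homotopic via `h` (with `h 1 = 0`, `h (x*y) = εl x * h y + h x * εr y` and
`εl x + εr x = h (d x)`), then the counit `c v = εl (ι v) + εr (ι v)` is the
coboundary `(h ∘ ι) ∘ ∂bl` for the bilinearized differential `∂bl = ρ ∘ d ∘ ι`.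
In particular the fundamental class of `(εl, εr)` vanishes on bilinearized homology. -/
theorem stmt_16 {V : Type*} [AddCommGroup V] [Module (ZMod 2) V]
    (d : TensorAlgebra (ZMod 2) V →ₗ[ZMod 2] TensorAlgebra (ZMod 2) V)
    (hleib : ∀ x y : TensorAlgebra (ZMod 2) V, d (x * y) = d x * y + x * d y)
    (hone : d 1 = 0) (hsq : ∀ x, d (d x) = 0)
    (εl εr : TensorAlgebra (ZMod 2) V →ₐ[ZMod 2] ZMod 2)
    (haugl : ∀ x, εl (d x) = 0) (haugr : ∀ x, εr (d x) = 0)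
    (ρ : TensorAlgebra (ZMod 2) V →ₗ[ZMod 2] V)
    (hρ1 : ρ 1 = 0) (hρι : ∀ v : V, ρ (TensorAlgebra.ι (ZMod 2) v) = v)
    (hρmul : ∀ x y : TensorAlgebra (ZMod 2) V, ρ (x * y) = εl x • ρ y + εr y • ρ x)
    (h : TensorAlgebra (ZMod 2) V →ₗ[ZMod 2] ZMod 2)
    (hh1 : h 1 = 0)
    (hhmul : ∀ x y : TensorAlgebra (ZMod 2) V, h (x * y) = εl x * h y + h x * εr y)
    (hhtp : ∀ x : TensorAlgebra (ZMod 2) V, εl x + εr x = h (d x)) :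
    ∀ v : V,
      εl (TensorAlgebra.ι (ZMod 2) v) + εr (TensorAlgebra.ι (ZMod 2) v) =
        h (TensorAlgebra.ι (ZMod 2) (ρ (d (TensorAlgebra.ι (ZMod 2) v)))) :=
  stmt_16_general d εl εr ρ hρ1 hρι hρmul h hh1 hhmul hhtp
end

section
/- In the stabilization setup over F = ZMod 2 (with A = TensorAlgebra F V, B = TensorAlgebra F (V × F × F), e₁ = ι_W(0,1,0), e₂ = ι_W(0,0,1), inc : A → B the algebra homomorphism with inc(ι_V v) = ι_W(v,0,0), and differentials ∂_A, ∂_B satisfying the Leibniz rule and killing 1, with ∂_B(ι_W(v,0,0)) = inc(∂_A(ι_V v)) for all v, ∂_B(e₁) = e₂, ∂_B(e₂) = 0): the map ε ↦ (ε(e₁), ε ∘ inc) is a bijection from the set of augmentations of (B, ∂_B) onto F × {augmentations of (A, ∂_A)}. (This is the identification of the augmentation variety of a degree-0 stabilization, V_Aug(S A) ≅ F × V_Aug(A); for ungraded DGAs this is the degree-0 case of the paper's statement.) -/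
/-!
An augmentation of the stabilization kills `e₂ = ∂ e₁`, so it is determined by its value on
`e₁` and its restriction along `inc`; since `inc` is a chain map, that restriction is an
augmentation of `A`. Conversely, an augmentation of `A` and an arbitrary value on `e₁` (with
`e₂ ↦ 0`) define an algebra map out of the free algebra `B`, and a Leibniz map composed with an
algebra map vanishes identically as soon as it vanishes on generators.
-/

namespace TensorAlgebra

variable {R M B : Type*} [CommSemiring R] [AddCommMonoid M] [Module R M] [Semiring B]
  [Algebra R B]

theorem map_leibniz_eq_of_ι (f : TensorAlgebra R M →ₐ[R] B)
    (d : TensorAlgebra R M →ₗ[R] TensorAlgebra R M) (d' : B →ₗ[R] B)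
    (hleib : ∀ x y, d (x * y) = d x * y + x * d y) (hone : d 1 = 0)
    (hleib' : ∀ x y, d' (x * y) = d' x * y + x * d' y) (hone' : d' 1 = 0)
    (hι : ∀ m, d' (f (ι R m)) = f (d (ι R m))) (x : TensorAlgebra R M) :
    d' (f x) = f (d x) := by
  induction x using TensorAlgebra.induction with
  | algebraMap r => simp [Algebra.algebraMap_eq_smul_one, hone, hone']
  | ι m => exact hι m
  | mul a b ha hb => rw [map_mul, hleib', ha, hb, hleib, map_add, map_mul, map_mul]
  | add a b ha hb => rw [map_add, map_add, ha, hb, map_add, map_add]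

theorem algHom_leibniz_eq_zero_of_ι (ε : TensorAlgebra R M →ₐ[R] B)
    (d : TensorAlgebra R M →ₗ[R] TensorAlgebra R M)
    (hleib : ∀ x y, d (x * y) = d x * y + x * d y) (hone : d 1 = 0)
    (hι : ∀ m, ε (d (ι R m)) = 0) (x : TensorAlgebra R M) : ε (d x) = 0 :=
  (map_leibniz_eq_of_ι ε d 0 hleib hone (by simp) rfl (fun m => (hι m).symm) x).symm

end TensorAlgebra

open TensorAlgebra

/-- In the stabilization setup over `F = ZMod 2`, the map
`ε ↦ (ε e₁, ε ∘ inc)` is a bijection from the set of augmentations of the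
stabilization `(B, dB)` onto `F × {augmentations of (A, dA)}`: the identification
`V_Aug(S A) ≅ F × V_Aug(A)` of the augmentation variety of a degree-0
stabilization. -/
theorem stmt_18 {V : Type*} [AddCommGroup V] [Module (ZMod 2) V]
    (inc : TensorAlgebra (ZMod 2) V →ₐ[ZMod 2]
      TensorAlgebra (ZMod 2) (V × ZMod 2 × ZMod 2))
    (hinc : ∀ v : V, inc (TensorAlgebra.ι (ZMod 2) v) =
      TensorAlgebra.ι (ZMod 2) ((v, 0, 0) : V × ZMod 2 × ZMod 2))
    (dA : TensorAlgebra (ZMod 2) V →ₗ[ZMod 2] TensorAlgebra (ZMod 2) V)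
    (dB : TensorAlgebra (ZMod 2) (V × ZMod 2 × ZMod 2) →ₗ[ZMod 2]
      TensorAlgebra (ZMod 2) (V × ZMod 2 × ZMod 2))
    (hleibA : ∀ x y : TensorAlgebra (ZMod 2) V, dA (x * y) = dA x * y + x * dA y)
    (honeA : dA 1 = 0)
    (hleibB : ∀ x y : TensorAlgebra (ZMod 2) (V × ZMod 2 × ZMod 2),
      dB (x * y) = dB x * y + x * dB y)
    (honeB : dB 1 = 0)
    (hdBinc : ∀ v : V,
      dB (TensorAlgebra.ι (ZMod 2) ((v, 0, 0) : V × ZMod 2 × ZMod 2)) =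
        inc (dA (TensorAlgebra.ι (ZMod 2) v)))
    (hdBe₁ : dB (TensorAlgebra.ι (ZMod 2) ((0, 1, 0) : V × ZMod 2 × ZMod 2)) =
      TensorAlgebra.ι (ZMod 2) ((0, 0, 1) : V × ZMod 2 × ZMod 2))
    (hdBe₂ : dB (TensorAlgebra.ι (ZMod 2) ((0, 0, 1) : V × ZMod 2 × ZMod 2)) = 0) :
    Set.BijOn
      (fun ε : TensorAlgebra (ZMod 2) (V × ZMod 2 × ZMod 2) →ₐ[ZMod 2] ZMod 2 =>
        (ε (TensorAlgebra.ι (ZMod 2) ((0, 1, 0) : V × ZMod 2 × ZMod 2)), ε.comp inc))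
      {ε | ∀ y : TensorAlgebra (ZMod 2) (V × ZMod 2 × ZMod 2), ε (dB y) = 0}
      (Set.univ ×ˢ
        {ε : TensorAlgebra (ZMod 2) V →ₐ[ZMod 2] ZMod 2 |
          ∀ x : TensorAlgebra (ZMod 2) V, ε (dA x) = 0}) := by
  have hchain : ∀ x, dB (inc x) = inc (dA x) :=
    map_leibniz_eq_of_ι inc dA dB hleibA honeA hleibB honeB fun v => by rw [hinc, hdBinc]
  have he₂ : ∀ ε : TensorAlgebra (ZMod 2) (V × ZMod 2 × ZMod 2) →ₐ[ZMod 2] ZMod 2,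
      (∀ y, ε (dB y) = 0) → ε (ι (ZMod 2) ((0, 0, 1) : V × ZMod 2 × ZMod 2)) = 0 :=
    fun ε hε => hdBe₁ ▸ hε _
  refine ⟨fun ε hε => ⟨trivial, fun x => ?_⟩, fun ε₁ hε₁ ε₂ hε₂ h => ?_, ?_⟩
  · rw [AlgHom.comp_apply, ← hchain, hε]
  · obtain ⟨he₁, hcomp⟩ := Prod.ext_iff.mp h
    ext
    case hl v => simpa [hinc, ← Prod.mk_zero_zero] using congr($hcomp (ι (ZMod 2) v))
    case hr.hl => simpa using he₁
    case hr.hr => simpa using (he₂ ε₁ hε₁).trans (he₂ ε₂ hε₂).symm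
  · rintro ⟨t, εA⟩ ⟨-, hεA⟩
    -- `ε (ι (v, a, b)) = εA (ι v) + t * a`
    let ε := lift (ZMod 2)
      ((εA.toLinearMap ∘ₗ ι (ZMod 2)).coprod (t • LinearMap.fst (ZMod 2) (ZMod 2) (ZMod 2)))
    have hcomp : ε.comp inc = εA := by ext v; simp [ε, hinc]
    refine ⟨ε, algHom_leibniz_eq_zero_of_ι ε dB hleibB honeB fun w => ?_, ?_⟩
    · have hgen : ε.toLinearMap ∘ₗ dB ∘ₗ ι (ZMod 2) = 0 := by
        ext
        case hl v =>
          simp only [LinearMap.comp_apply, LinearMap.inl_apply, AlgHom.toLinearMap_apply]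
          rw [Prod.mk_zero_zero.symm, hdBinc, ← AlgHom.comp_apply, hcomp, hεA,
            LinearMap.zero_apply]
        case hr.hl => simp [hdBe₁, ε]
        case hr.hr => simp [hdBe₂]
      exact LinearMap.congr_fun hgen w
    · simp [ε, hcomp]
end

section
/- Let F = ZMod 2, let K and J be types, let color : K → Option J, and let A = FreeAlgebra F K with generators ι κ. Call κ mixed if color κ = none and pure of color j if color κ = some j. Let q : A → A be the unital algebra homomorphism with q(ι κ) = ι κ for pure κ and q(ι κ) = 0 for mixed κ, and for j ∈ J let A_j = Algebra.adjoin F {ι κ | color κ = some j}. Let ∂ : A → A be F-linear with ∂(x*y) = (∂x)*y + x*(∂y) and ∂(1) = 0. Assume: (i) q(∂(ι κ)) = 0 for every mixed κ; (ii) q(∂(ι κ)) ∈ A_j for every κ of color j; and (iii) for each j there is a unital F-algebra homomorphism ε_j : A_j → F with ε_j(q(∂(ι κ))) = 0 for every κ of color j. Then the unital algebra homomorphism ε : A → F determined by ε(ι κ) = ε_j(ι κ) for κ of color j (using ι κ ∈ A_j) and ε(ι κ) = 0 for mixed κ satisfies ε ∘ ∂ = 0; that is, ε is an augmentation of (A,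 ∂). -/
/-! By the Leibniz rule `ε ∘ ∂` vanishes once it vanishes on the generators. On a
generator, `ε (∂ κ) = ε (q (∂ κ))`, since `ε ∘ q` and `ε` agree on generators (both kill the
mixed ones). For mixed `κ` this is zero by (i). For `κ` of color `j`, `q (∂ κ)` lies in `A_j`
by (ii), where `ε` agrees with `ε_j` because the two agree on the generators of `A_j`; so it is
zero by (iii). -/

/-- The subalgebra of the free algebra generated by the generators of color `j`. -/
def pureSubalgebra {K J : Type*} (color : K → Option J) (j : J) :
    Subalgebra (ZMod 2) (FreeAlgebra (ZMod 2) K) :=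
  Algebra.adjoin (ZMod 2)
    {x | ∃ κ : K, color κ = some j ∧ x = FreeAlgebra.ι (ZMod 2) κ}

theorem AlgHom.apply_eq_of_eqOn_adjoin {R A B : Type*} [CommSemiring R] [Semiring A] [Semiring B]
    [Algebra R A] [Algebra R B] {s : Set A} (g : A →ₐ[R] B) (f : Algebra.adjoin R s →ₐ[R] B)
    (h : ∀ x (hx : x ∈ s), g x = f ⟨x, Algebra.subset_adjoin hx⟩) {x : A}
    (hx : x ∈ Algebra.adjoin R s) : g x = f ⟨x, hx⟩ :=
  DFunLike.congr_fun (AlgHom.adjoin_ext (φ₁ := g.comp (Algebra.adjoin R s).val) h) ⟨x, hx⟩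

theorem FreeAlgebra.algHom_apply_leibniz_eq_zero {R X B : Type*} [CommSemiring R] [Semiring B]
    [Algebra R B] (d : FreeAlgebra R X →ₗ[R] FreeAlgebra R X)
    (hleib : ∀ x y : FreeAlgebra R X, d (x * y) = d x * y + x * d y) (hone : d 1 = 0)
    (ε : FreeAlgebra R X →ₐ[R] B) (hι : ∀ x, ε (d (ι R x)) = 0) (a : FreeAlgebra R X) :
    ε (d a) = 0 := by
  induction a using FreeAlgebra.induction with
  | grade0 r => rw [Algebra.algebraMap_eq_smul_one, map_smul, hone, smul_zero, map_zero]
  | grade1 x => exact hι x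
  | mul a b ha hb => rw [hleib, map_add, map_mul, map_mul, ha, hb, zero_mul, mul_zero, add_zero]
  | add a b ha hb => rw [map_add, map_add, ha, hb, add_zero]

/-- Augmentations of the pure sub-DGAs combine to an augmentation of the
whole DGA. Generators `κ` are colored by `color : K → Option J` (`none` = mixed,
`some j` = pure of color `j`); `q` is the algebra endomorphism fixing pure generators
and killing mixed ones; assuming (i) `q (∂ (ι κ)) = 0` for mixed `κ`, (ii)
`q (∂ (ι κ)) ∈ A_j` for `κ` of color `j`, and (iii) each `ε_j : A_j → F` annihilates
the `q (∂ (ι κ))` for `κ` of color `j`, the algebra homomorphism `ε` determined by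
`ε (ι κ) = ε_j (ι κ)` on pure generators and `ε (ι κ) = 0` on mixed generators is an
augmentation of `(A, ∂)`. -/
theorem stmt_19 {K J : Type*} (color : K → Option J)
    (q : FreeAlgebra (ZMod 2) K →ₐ[ZMod 2] FreeAlgebra (ZMod 2) K)
    (hqpure : ∀ (κ : K) (j : J), color κ = some j →
      q (FreeAlgebra.ι (ZMod 2) κ) = FreeAlgebra.ι (ZMod 2) κ)
    (hqmixed : ∀ κ : K, color κ = none → q (FreeAlgebra.ι (ZMod 2) κ) = 0)
    (d : FreeAlgebra (ZMod 2) K →ₗ[ZMod 2] FreeAlgebra (ZMod 2) K)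
    (hleib : ∀ x y : FreeAlgebra (ZMod 2) K, d (x * y) = d x * y + x * d y)
    (hone : d 1 = 0)
    (hi : ∀ κ : K, color κ = none → q (d (FreeAlgebra.ι (ZMod 2) κ)) = 0)
    (hii : ∀ (κ : K) (j : J), color κ = some j →
      q (d (FreeAlgebra.ι (ZMod 2) κ)) ∈ pureSubalgebra color j)
    (εj : ∀ j : J, pureSubalgebra color j →ₐ[ZMod 2] ZMod 2)
    (hiii : ∀ (κ : K) (j : J), color κ = some j →
      ∀ hm : q (d (FreeAlgebra.ι (ZMod 2) κ)) ∈ pureSubalgebra color j,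
        εj j ⟨q (d (FreeAlgebra.ι (ZMod 2) κ)), hm⟩ = 0)
    (ε : FreeAlgebra (ZMod 2) K →ₐ[ZMod 2] ZMod 2)
    (hεpure : ∀ (κ : K) (j : J), color κ = some j →
      ∀ hm : FreeAlgebra.ι (ZMod 2) κ ∈ pureSubalgebra color j,
        ε (FreeAlgebra.ι (ZMod 2) κ) = εj j ⟨FreeAlgebra.ι (ZMod 2) κ, hm⟩)
    (hεmixed : ∀ κ : K, color κ = none → ε (FreeAlgebra.ι (ZMod 2) κ) = 0) :
    ∀ x : FreeAlgebra (ZMod 2) K, ε (d x) = 0 := by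
  have hεq : ε.comp q = ε := FreeAlgebra.hom_ext <| funext fun κ => by
    cases hc : color κ with
    | none =>
      simp only [Function.comp_apply, AlgHom.comp_apply, hqmixed κ hc, map_zero, hεmixed κ hc]
    | some j => simp only [Function.comp_apply, AlgHom.comp_apply, hqpure κ j hc]
  have hεj (j : J) {x} (hx : x ∈ pureSubalgebra color j) : ε x = εj j ⟨x, hx⟩ :=
    ε.apply_eq_of_eqOn_adjoin (εj j) (by rintro _ ⟨κ, hκ, rfl⟩; exact hεpure κ j hκ _) hx
  refine FreeAlgebra.algHom_apply_leibniz_eq_zero d hleib hone ε fun κ => ?_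
  rw [← hεq, AlgHom.comp_apply]
  cases hc : color κ with
  | none => rw [hi κ hc, map_zero]
  | some j => rw [hεj j (hii κ j hc), hiii κ j hc]
end
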